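/- Suppose there exists τ̂ ∈ ℝ^N with τ̂_i < φ_i((λ_a + τ̂_{j_a})_{a∈A}) for every node i ≠ d. If (τ¹, z¹) and (τ², z²) both solve the dynamic programming system at λ, then τ¹ = τ² and z¹ = z². -/

import Mathlib

/-!
A comparison principle. At a node `i ≠ d` the gradient of the concave `φ_i` is a probability
vector, so the tangent-plane inequality gives `φ_i(λ + σ ∘ head) ≤ φ_i(λ + τ ∘ head) + max (σ - τ)`;
hence for a strict subsolution `σ` and a supersolution `τ` the gap `σ - τ` is largest at `d`.
The convex combination `(1 - t) σ + t τ̂` of a subsolution with the strict subsolution `τ̂` is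
strict, so letting `t → 0` the same holds for every subsolution. Two solutions vanishing at `d`
are thus ordered both ways.
-/

open Finset Filter Topology

theorem ConcaveOn.le_add_of_hasFDerivAt {E : Type*} [NormedAddCommGroup E] [NormedSpace ℝ E]
    {f : E → ℝ} {L : E →L[ℝ] ℝ} {y : E} (hf : ConcaveOn ℝ Set.univ f) (hL : HasFDerivAt f L y)
    (x : E) : f x ≤ f y + L (x - y) := by
  let g : ℝ → E := AffineMap.lineMap y x
  have hg : ConcaveOn ℝ Set.univ (f ∘ g) := hf.comp_affineMap _
  have hg' : HasDerivAt (f ∘ g) (L (x - y)) 0 := by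
    rw [← AffineMap.lineMap_apply_zero y x (k := ℝ)] at hL
    exact hL.comp_hasDerivAt 0 AffineMap.hasDerivAt_lineMap
  have := hg.slope_le_of_hasDerivAt (Set.mem_univ 0) (Set.mem_univ 1) zero_lt_one hg'
  simp only [slope_def_field, Function.comp_apply, g, AffineMap.lineMap_apply_zero,
    AffineMap.lineMap_apply_one, sub_zero, div_one] at this
  linarith

theorem ConcaveOn.le_add_of_hasFDerivAt_of_sub_le {ι : Type*} [Fintype ι] {f : (ι → ℝ) → ℝ}
    {w z z' : ι → ℝ} {M : ℝ} (hf : ConcaveOn ℝ Set.univ f)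
    (hfd : HasFDerivAt f (∑ a, w a • (ContinuousLinearMap.proj a : (ι → ℝ) →L[ℝ] ℝ)) z)
    (hw0 : ∀ a, 0 ≤ w a) (hw1 : ∑ a, w a = 1) (hM : ∀ a, z' a - z a ≤ M) :
    f z' ≤ f z + M :=
  calc f z' ≤ f z + ∑ a, w a * (z' a - z a) := by
        simpa using hf.le_add_of_hasFDerivAt hfd z'
    _ ≤ f z + ∑ a, w a * M := by gcongr with a; exacts [hw0 a, hM a]
    _ = f z + M := by rw [← sum_mul, hw1, one_mul]

section DynamicProgramming

variable {N A : Type*} (head : A → N) (d : N) (lam : A → ℝ) (phi : N → (A → ℝ) → ℝ)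

def IsSubsolution (σ : N → ℝ) : Prop :=
  ∀ i, i ≠ d → σ i ≤ phi i (fun a => lam a + σ (head a))

def IsStrictSubsolution (σ : N → ℝ) : Prop :=
  ∀ i, i ≠ d → σ i < phi i (fun a => lam a + σ (head a))

def IsSupersolution (τ : N → ℝ) : Prop :=
  ∀ i, i ≠ d → phi i (fun a => lam a + τ (head a)) ≤ τ i

variable {head d lam phi}

theorem IsSubsolution.isStrictSubsolution_convexCombination
    (hconc : ∀ i, i ≠ d → ConcaveOn ℝ Set.univ (phi i)) {σ σ' : N → ℝ}
    (hσ : IsSubsolution head d lam phi σ) (hσ' : IsStrictSubsolution head d lam phi σ')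
    {t : ℝ} (ht₀ : 0 < t) (ht₁ : t ≤ 1) :
    IsStrictSubsolution head d lam phi ((1 - t) • σ + t • σ') := by
  intro i hi
  have harc : (fun a => lam a + ((1 - t) • σ + t • σ') (head a)) =
      (1 - t) • (fun a => lam a + σ (head a)) + t • (fun a => lam a + σ' (head a)) := by
    funext a
    simp only [Pi.add_apply, Pi.smul_apply, smul_eq_mul]
    ring
  calc ((1 - t) • σ + t • σ') i
      < (1 - t) • phi i (fun a => lam a + σ (head a)) +
          t • phi i (fun a => lam a + σ' (head a)) := by
        simp only [Pi.add_apply, Pi.smul_apply, smul_eq_mul]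
        have := mul_le_mul_of_nonneg_left (hσ i hi) (sub_nonneg.2 ht₁)
        have := mul_lt_mul_of_pos_left (hσ' i hi) ht₀
        linarith
    _ ≤ phi i ((1 - t) • (fun a => lam a + σ (head a)) +
          t • (fun a => lam a + σ' (head a))) :=
        (hconc i hi).2 (Set.mem_univ _) (Set.mem_univ _) (by linarith) ht₀.le (by ring)
    _ = phi i (fun a => lam a + ((1 - t) • σ + t • σ') (head a)) := by rw [harc]

variable [Fintype N] [Fintype A] {Dphi : N → (A → ℝ) → A → ℝ}

theorem IsStrictSubsolution.sub_le_sub_dest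
    (hconc : ∀ i, i ≠ d → ConcaveOn ℝ Set.univ (phi i))
    (hderiv : ∀ i, i ≠ d → ∀ z : A → ℝ,
      HasFDerivAt (phi i) (∑ a, Dphi i z a • (ContinuousLinearMap.proj a : (A → ℝ) →L[ℝ] ℝ)) z)
    (hDnn : ∀ i, i ≠ d → ∀ z a, 0 ≤ Dphi i z a) (hDsum : ∀ i, i ≠ d → ∀ z, ∑ a, Dphi i z a = 1)
    {σ τ : N → ℝ} (hσ : IsStrictSubsolution head d lam phi σ)
    (hτ : IsSupersolution head d lam phi τ) (j : N) :
    σ j - τ j ≤ σ d - τ d := by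
  obtain ⟨i, -, hmax⟩ := exists_max_image univ (fun j => σ j - τ j) ⟨d, mem_univ d⟩
  rcases eq_or_ne i d with rfl | hi
  · exact hmax j (mem_univ j)
  · have hstep : phi i (fun a => lam a + σ (head a)) ≤
        phi i (fun a => lam a + τ (head a)) + (σ i - τ i) :=
      (hconc i hi).le_add_of_hasFDerivAt_of_sub_le (hderiv i hi _) (hDnn i hi _) (hDsum i hi _)
        fun a => by simpa using hmax (head a) (mem_univ _)
    linarith [hσ i hi, hτ i hi]

theorem IsSubsolution.sub_le_sub_dest
    (hconc : ∀ i, i ≠ d → ConcaveOn ℝ Set.univ (phi i))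
    (hderiv : ∀ i, i ≠ d → ∀ z : A → ℝ,
      HasFDerivAt (phi i) (∑ a, Dphi i z a • (ContinuousLinearMap.proj a : (A → ℝ) →L[ℝ] ℝ)) z)
    (hDnn : ∀ i, i ≠ d → ∀ z a, 0 ≤ Dphi i z a) (hDsum : ∀ i, i ≠ d → ∀ z, ∑ a, Dphi i z a = 1)
    {σ σ' τ : N → ℝ} (hσ : IsSubsolution head d lam phi σ)
    (hσ' : IsStrictSubsolution head d lam phi σ') (hτ : IsSupersolution head d lam phi τ)
    (j : N) : σ j - τ j ≤ σ d - τ d := by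
  let gap : ℝ → ℝ := fun t =>
    ((1 - t) * σ j + t * σ' j - τ j) - ((1 - t) * σ d + t * σ' d - τ d)
  have hgap : ∀ᶠ t in 𝓝[>] 0, gap t ≤ 0 := by
    filter_upwards [Ioc_mem_nhdsGT zero_lt_one] with t ht
    have := ((hσ.isStrictSubsolution_convexCombination hconc hσ' ht.1 ht.2).sub_le_sub_dest
      hconc hderiv hDnn hDsum hτ j)
    simp only [Pi.add_apply, Pi.smul_apply, smul_eq_mul] at this
    simp only [gap]
    linarith
  have hlim : Tendsto gap (𝓝[>] 0) (𝓝 (gap 0)) :=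
    ((by fun_prop : Continuous gap).tendsto 0).mono_left nhdsWithin_le_nhds
  have := le_of_tendsto hlim hgap
  simp only [gap] at this
  linarith

end DynamicProgramming

theorem stmt8_general {N A : Type} [Fintype N] [Fintype A] [DecidableEq N]
    (tail head : A → N) (d : N) (lam : A → ℝ)
    (phi : N → (A → ℝ) → ℝ) (Dphi : N → (A → ℝ) → A → ℝ)
    (hconc : ∀ i, i ≠ d → ConcaveOn ℝ Set.univ (phi i))
    (hderiv : ∀ i, i ≠ d → ∀ z : A → ℝ,
      HasFDerivAt (phi i)
        (∑ a, Dphi i z a • (ContinuousLinearMap.proj a : (A → ℝ) →L[ℝ] ℝ)) z)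
    (hDnn : ∀ i, i ≠ d → ∀ z a, 0 ≤ Dphi i z a)
    (hDzero : ∀ i, i ≠ d → ∀ (z : A → ℝ) a, tail a ≠ i → Dphi i z a = 0)
    (hDsum : ∀ i, i ≠ d → ∀ z : A → ℝ,
      ∑ a ∈ Finset.univ.filter (fun a => tail a = i), Dphi i z a = 1)
    (τhat : N → ℝ)
    (hsub : ∀ i, i ≠ d → τhat i < phi i (fun a => lam a + τhat (head a)))
    (τ₁ : N → ℝ) (z₁ : A → ℝ)
    (hτd₁ : τ₁ d = 0) (hz₁ : ∀ a, z₁ a = lam a + τ₁ (head a))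
    (hτ₁ : ∀ i, i ≠ d → τ₁ i = phi i z₁)
    (τ₂ : N → ℝ) (z₂ : A → ℝ)
    (hτd₂ : τ₂ d = 0) (hz₂ : ∀ a, z₂ a = lam a + τ₂ (head a))
    (hτ₂ : ∀ i, i ≠ d → τ₂ i = phi i z₂) :
    τ₁ = τ₂ ∧ z₁ = z₂ := by
  obtain rfl : z₁ = fun a => lam a + τ₁ (head a) := funext hz₁
  obtain rfl : z₂ = fun a => lam a + τ₂ (head a) := funext hz₂
  have hDsum_univ : ∀ i, i ≠ d → ∀ z, ∑ a, Dphi i z a = 1 := fun i hi z =>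
    (sum_filter_of_ne fun a _ h => not_not.1 (mt (hDzero i hi z a) h)).symm.trans (hDsum i hi z)
  have hle {σ τ : N → ℝ} (hσd : σ d = 0) (hτd : τ d = 0)
      (hσ : ∀ i, i ≠ d → σ i = phi i (fun a => lam a + σ (head a)))
      (hτ : ∀ i, i ≠ d → τ i = phi i (fun a => lam a + τ (head a))) : σ ≤ τ := fun j => by
    have := IsSubsolution.sub_le_sub_dest hconc hderiv hDnn hDsum_univ
      (fun i hi => (hσ i hi).le) hsub (fun i hi => (hτ i hi).ge) j
    linarith
  obtain rfl : τ₁ = τ₂ := le_antisymm (hle hτd₁ hτd₂ hτ₁ hτ₂) (hle hτd₂ hτd₁ hτ₂ hτ₁)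
  exact ⟨rfl, rfl⟩

/-- under the strict subsolution hypothesis, the dynamic programming
system at `λ` has at most one solution `(τ, z)`. -/
theorem stmt8 {N A : Type} [Fintype N] [Fintype A] [DecidableEq N] [DecidableEq A]
    (tail head : A → N) (d : N) (lam : A → ℝ)
    (phi : N → (A → ℝ) → ℝ) (Dphi : N → (A → ℝ) → A → ℝ)
    (hout : ∀ i, i ≠ d → ∃ a, tail a = i)
    (hdep : ∀ i, i ≠ d → ∀ z z' : A → ℝ, (∀ a, tail a = i → z a = z' a) →
      phi i z = phi i z')
    (hconc : ∀ i, i ≠ d → ConcaveOn ℝ Set.univ (phi i))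
    (hderiv : ∀ i, i ≠ d → ∀ z : A → ℝ,
      HasFDerivAt (phi i)
        (∑ a, Dphi i z a • (ContinuousLinearMap.proj a : (A → ℝ) →L[ℝ] ℝ)) z)
    (hmono : ∀ i, i ≠ d → Monotone (phi i))
    (hDnn : ∀ i, i ≠ d → ∀ z a, 0 ≤ Dphi i z a)
    (hDzero : ∀ i, i ≠ d → ∀ (z : A → ℝ) a, tail a ≠ i → Dphi i z a = 0)
    (hDsum : ∀ i, i ≠ d → ∀ z : A → ℝ,
      ∑ a ∈ Finset.univ.filter (fun a => tail a = i), Dphi i z a = 1)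
    (τhat : N → ℝ)
    (hsub : ∀ i, i ≠ d → τhat i < phi i (fun a => lam a + τhat (head a)))
    (τ₁ : N → ℝ) (z₁ : A → ℝ)
    (hτd₁ : τ₁ d = 0) (hz₁ : ∀ a, z₁ a = lam a + τ₁ (head a))
    (hτ₁ : ∀ i, i ≠ d → τ₁ i = phi i z₁)
    (τ₂ : N → ℝ) (z₂ : A → ℝ)
    (hτd₂ : τ₂ d = 0) (hz₂ : ∀ a, z₂ a = lam a + τ₂ (head a))
    (hτ₂ : ∀ i, i ≠ d → τ₂ i = phi i z₂) :
    τ₁ = τ₂ ∧ z₁ = z₂ :=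
  stmt8_general tail head d lam phi Dphi hconc hderiv hDnn hDzero hDsum τhat hsub τ₁ z₁ hτd₁ hz₁ hτ₁
    τ₂ z₂ hτd₂ hz₂ hτ₂
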